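/- arXiv:2205.04833 — 9 statements merged into one kernel-verified Lean document; each statement's English description precedes it below -/
import Mathlib

section
/- If a vehicle starts at the origin with heading 0, turns along a circle of radius r = R(x,y,θ) := (x·sin θ − y·cos θ)/(1 − cos θ) through angle θ with 0 < θ < 2π and cos θ ≠ 1, and then travels in a straight line in direction θ, then the point (x,y) lies on the straight-line portion of the path, i.e., (x,y) = (r·sin θ, r·(1−cos θ)) + d·(cos θ, sin θ) for some real d. -/
open Real

/- The radius `R(x, y, θ)` is exactly the one for which `(x, y) - (r sin θ, r (1 - cos θ))` has zero
cross product with the unit heading `(cos θ, sin θ)`; a vector orthogonal to the normal of a unit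
direction is a multiple of it, the multiple being its component along that direction. -/

theorem exists_eq_add_mul_of_cross_eq_zero {a b x y c s : ℝ} (hunit : s ^ 2 + c ^ 2 = 1)
    (hcross : (x - a) * s - (y - b) * c = 0) :
    ∃ d : ℝ, x = a + d * c ∧ y = b + d * s :=
  ⟨(x - a) * c + (y - b) * s,
    by linear_combination s * hcross - (x - a) * hunit,
    by linear_combination -c * hcross - (y - b) * hunit⟩

theorem cross_exit_point_eq_zero {x y θ r : ℝ}
    (hr : r * (1 - cos θ) = x * sin θ - y * cos θ) :
    (x - r * sin θ) * sin θ - (y - r * (1 - cos θ)) * cos θ = 0 := by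
  linear_combination -hr - r * sin_sq_add_cos_sq θ

theorem point_on_straight_portion_general (x y θ : ℝ)
    (hc : Real.cos θ ≠ 1) (r : ℝ)
    (hr : r = (x * Real.sin θ - y * Real.cos θ) / (1 - Real.cos θ)) :
    ∃ d : ℝ, x = r * Real.sin θ + d * Real.cos θ ∧
      y = r * (1 - Real.cos θ) + d * Real.sin θ := by
  have hr' : r * (1 - cos θ) = x * sin θ - y * cos θ := by
    rw [hr, div_mul_cancel₀ _ (sub_ne_zero.mpr hc.symm)]
  exact exists_eq_add_mul_of_cross_eq_zero (sin_sq_add_cos_sq θ) (cross_exit_point_eq_zero hr')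

/-- If a vehicle starting at the origin with heading 0 turns along a circle of radius
`r = R(x,y,θ) = (x sin θ − y cos θ)/(1 − cos θ)` through angle `θ ∈ (0, 2π)` and then
travels straight in direction `θ`, then `(x, y)` lies on the straight-line portion. -/
theorem point_on_straight_portion (x y θ : ℝ) (h1 : 0 < θ) (h2 : θ < 2 * π)
    (hc : Real.cos θ ≠ 1) (r : ℝ)
    (hr : r = (x * Real.sin θ - y * Real.cos θ) / (1 - Real.cos θ)) :
    ∃ d : ℝ, x = r * Real.sin θ + d * Real.cos θ ∧
      y = r * (1 - Real.cos θ) + d * Real.sin θ :=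
  point_on_straight_portion_general x y θ hc r hr
end

section
/- For turn-to-bearing motion through angle θ with radius r = R(x,y,θ) = (x sin θ − y cos θ)/(1 − cos θ), if the point (x,y) lies on the straight segment (i.e., the signed distance d from the tangent point to (x,y) is nonnegative), then the total path length satisfies rθ + d = x(cot(θ/2)·θ − 1) + y(cot(θ/2) − (cos θ/(1 − cos θ))·θ). -/
open Real

/-
The map `(x, y) ↦ x (cot(θ/2) θ − 1) + y (cot(θ/2) − θ cos θ / (1 − cos θ))` is linear, and
the half-angle formulas show that it sends the tangent point of the unit-radius turn,
`(sin θ, 1 − cos θ)`, to `θ` and the final heading `(cos θ, sin θ)` to `1`. Since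
`(x, y) = r (sin θ, 1 − cos θ) + d (cos θ, sin θ)`, its value at `(x, y)` is `r θ + d`.
-/

section HalfAngle

variable (θ : ℝ)

lemma sin_eq_two_mul_sin_half_mul_cos_half : sin θ = 2 * sin (θ / 2) * cos (θ / 2) := by
  rw [← sin_two_mul, mul_div_cancel₀ θ two_ne_zero]

lemma one_sub_cos_eq_two_mul_sin_half_sq : 1 - cos θ = 2 * sin (θ / 2) ^ 2 := by
  conv_lhs => rw [← mul_div_cancel₀ θ two_ne_zero, cos_two_mul, cos_sq']
  ring

lemma one_add_cos_eq_two_mul_cos_half_sq : 1 + cos θ = 2 * cos (θ / 2) ^ 2 := by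
  conv_lhs => rw [← mul_div_cancel₀ θ two_ne_zero, cos_two_mul]
  ring

variable {θ}

lemma sin_mul_cot_half (hs : sin (θ / 2) ≠ 0) :
    sin θ * (cos (θ / 2) / sin (θ / 2)) = 1 + cos θ := by
  rw [sin_eq_two_mul_sin_half_mul_cos_half θ, one_add_cos_eq_two_mul_cos_half_sq]
  field_simp

lemma one_sub_cos_mul_cot_half (hs : sin (θ / 2) ≠ 0) :
    (1 - cos θ) * (cos (θ / 2) / sin (θ / 2)) = sin θ := by
  rw [sin_eq_two_mul_sin_half_mul_cos_half θ, one_sub_cos_eq_two_mul_sin_half_sq]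
  field_simp

lemma sin_div_one_sub_cos (hs : sin (θ / 2) ≠ 0) :
    sin θ / (1 - cos θ) = cos (θ / 2) / sin (θ / 2) := by
  rw [sin_eq_two_mul_sin_half_mul_cos_half θ, one_sub_cos_eq_two_mul_sin_half_sq]
  field_simp

end HalfAngle

noncomputable def pathLengthForm (θ x y : ℝ) : ℝ :=
  x * ((cos (θ / 2) / sin (θ / 2)) * θ - 1) +
    y * (cos (θ / 2) / sin (θ / 2) - (cos θ / (1 - cos θ)) * θ)

section PathLengthForm

variable {θ : ℝ}

lemma pathLengthForm_add (x y x' y' : ℝ) :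
    pathLengthForm θ (x + x') (y + y') = pathLengthForm θ x y + pathLengthForm θ x' y' := by
  unfold pathLengthForm; ring

lemma pathLengthForm_smul (a x y : ℝ) :
    pathLengthForm θ (a * x) (a * y) = a * pathLengthForm θ x y := by
  unfold pathLengthForm; ring

lemma pathLengthForm_tangent (hs : sin (θ / 2) ≠ 0) :
    pathLengthForm θ (sin θ) (1 - cos θ) = θ := by
  have h1c : 1 - cos θ ≠ 0 := by
    rw [one_sub_cos_eq_two_mul_sin_half_sq]; positivity
  unfold pathLengthForm
  linear_combination θ * sin_mul_cot_half hs + one_sub_cos_mul_cot_half hs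
    - θ * div_mul_cancel₀ (cos θ) h1c

lemma pathLengthForm_heading (hs : sin (θ / 2) ≠ 0) :
    pathLengthForm θ (cos θ) (sin θ) = 1 := by
  unfold pathLengthForm
  linear_combination sin_mul_cot_half hs - θ * cos θ * sin_div_one_sub_cos hs

end PathLengthForm

theorem path_length_linear_form_general (x y θ r d : ℝ)
    (hs : Real.sin (θ / 2) ≠ 0)
    (hx : x - r * Real.sin θ = d * Real.cos θ)
    (hy : y - r * (1 - Real.cos θ) = d * Real.sin θ) :
    r * θ + d =
      x * ((Real.cos (θ / 2) / Real.sin (θ / 2)) * θ - 1) +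
      y * (Real.cos (θ / 2) / Real.sin (θ / 2) -
        (Real.cos θ / (1 - Real.cos θ)) * θ) := by
  have hx' : x = r * sin θ + d * cos θ := by linarith
  have hy' : y = r * (1 - cos θ) + d * sin θ := by linarith
  change r * θ + d = pathLengthForm θ x y
  rw [hx', hy', pathLengthForm_add, pathLengthForm_smul, pathLengthForm_smul,
    pathLengthForm_tangent hs, pathLengthForm_heading hs, mul_one]

/-- Closed-form for the total turn-to-bearing path length: with `r = R(x,y,θ)` and the
point `(x,y)` on the straight segment at (nonnegative) signed distance `d` from the
tangent point, `rθ + d = x(cot(θ/2)θ − 1) + y(cot(θ/2) − (cos θ/(1 − cos θ))θ)`. -/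
theorem path_length_linear_form (x y θ r d : ℝ)
    (h1 : 0 < θ) (h2 : θ < 2 * π) (hs : Real.sin (θ / 2) ≠ 0)
    (hr : r = (x * Real.sin θ - y * Real.cos θ) / (1 - Real.cos θ))
    (hd : 0 ≤ d)
    (hx : x - r * Real.sin θ = d * Real.cos θ)
    (hy : y - r * (1 - Real.cos θ) = d * Real.sin θ) :
    r * θ + d =
      x * ((Real.cos (θ / 2) / Real.sin (θ / 2)) * θ - 1) +
      y * (Real.cos (θ / 2) / Real.sin (θ / 2) -
        (Real.cos θ / (1 - Real.cos θ)) * θ) :=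
  path_length_linear_form_general x y θ r d hs hx hy
end

section
/- Circular arc path length bounds: if a point (x,y) lies on a circular arc of radius r > 0 starting from the origin (center (0,r)) at turned angle θ_m with 0 < θ₁ ≤ θ_m ≤ θ₂ < 2π, then √(x²+y²)/sinc(θ₁/2) ≤ r·θ_m ≤ √(x²+y²)/sinc(θ₂/2). -/
open Real

lemma sin_div_anti {a b : ℝ} (ha : 0 < a) (hab : a ≤ b) (hb : b ≤ π) :
    Real.sin b / b ≤ Real.sin a / a := by
  have hb0 : 0 < b := lt_of_lt_of_le ha hab
  rw [div_le_div_iff₀ hb0 ha]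
  have h1 : (0:ℝ) ≤ 1 - a / b := by
    have : a / b ≤ 1 := (div_le_one hb0).2 hab
    linarith
  have h2 : (0:ℝ) ≤ a / b := by positivity
  have hconc := strictConcaveOn_sin_Icc.concaveOn.2 (x := 0) (y := b)
    ⟨le_refl 0, Real.pi_pos.le⟩ ⟨hb0.le, hb⟩ h1 h2 (by ring)
  simp only [smul_eq_mul, mul_zero, Real.sin_zero, zero_add, mul_zero] at hconc
  have heq : a / b * b = a := by field_simp
  rw [heq] at hconc
  have : a / b * Real.sin b = Real.sin b * a / b := by ring
  rw [this, div_le_iff₀ hb0] at hconc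
  linarith

/-- `sinc u = sin u / u` (with `sinc 0 = 1`). -/
noncomputable def sinc (u : ℝ) : ℝ := if u = 0 then 1 else Real.sin u / u

/-- Circular arc path length bounds: if `(x,y)` lies on a circular arc of radius `r > 0`
from the origin at turned angle `θ_m ∈ [θ₁, θ₂] ⊆ (0, 2π)`, then the arc length
`r·θ_m` is bounded between `√(x²+y²)/sinc(θ₁/2)` and `√(x²+y²)/sinc(θ₂/2)`. -/
theorem circular_arc_length_bounds (r θ₁ θ₂ θm x y : ℝ) (hr : 0 < r)
    (h1 : 0 < θ₁) (h12 : θ₁ ≤ θm) (h2 : θm ≤ θ₂) (h22 : θ₂ < 2 * π)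
    (hx : x = r * Real.sin θm) (hy : y = r * (1 - Real.cos θm)) :
    Real.sqrt (x ^ 2 + y ^ 2) / _root_.sinc (θ₁ / 2) ≤ r * θm ∧
      r * θm ≤ Real.sqrt (x ^ 2 + y ^ 2) / _root_.sinc (θ₂ / 2) := by
  have hm0 : 0 < θm := lt_of_lt_of_le h1 h12
  have hmπ : θm / 2 < π := by linarith
  have h2π : θ₂ / 2 < π := by linarith
  have h2pos : 0 < θ₂ := lt_of_lt_of_le hm0 h2
  have hsm : 0 ≤ Real.sin (θm / 2) := Real.sin_nonneg_of_nonneg_of_le_pi (by linarith) hmπ.le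
  -- sqrt computation
  have hsq : Real.sin (θm / 2) ^ 2 = (1 - Real.cos θm) / 2 := by
    have := Real.sin_sq_eq_half_sub (θm / 2)
    rw [show 2 * (θm / 2) = θm by ring] at this
    linarith
  have hxy : x ^ 2 + y ^ 2 = (2 * r * Real.sin (θm / 2)) ^ 2 := by
    have hpy : Real.sin θm ^ 2 = 1 - Real.cos θm ^ 2 := by
      have := Real.sin_sq_add_cos_sq θm; linarith
    rw [hx, hy]; linear_combination r ^ 2 * hpy - 4 * r ^ 2 * hsq
  have hsqrt : Real.sqrt (x ^ 2 + y ^ 2) = 2 * r * Real.sin (θm / 2) := by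
    rw [hxy]; exact Real.sqrt_sq (by positivity)
  -- sinc values
  have hne1 : θ₁ / 2 ≠ 0 := by positivity
  have hne2 : θ₂ / 2 ≠ 0 := by positivity
  have hs1 : _root_.sinc (θ₁ / 2) = Real.sin (θ₁ / 2) / (θ₁ / 2) := by simp [_root_.sinc, hne1]
  have hs2 : _root_.sinc (θ₂ / 2) = Real.sin (θ₂ / 2) / (θ₂ / 2) := by simp [_root_.sinc, hne2]
  have hs1pos : 0 < _root_.sinc (θ₁ / 2) := by
    rw [hs1]
    exact div_pos (Real.sin_pos_of_pos_of_lt_pi (by linarith) (by linarith)) (by linarith)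
  have hs2pos : 0 < _root_.sinc (θ₂ / 2) := by
    rw [hs2]
    exact div_pos (Real.sin_pos_of_pos_of_lt_pi (by linarith) h2π) (by linarith)
  have key1 : Real.sin (θm / 2) / (θm / 2) ≤ _root_.sinc (θ₁ / 2) := by
    rw [hs1]; exact sin_div_anti (by linarith) (by linarith) hmπ.le
  have key2 : _root_.sinc (θ₂ / 2) ≤ Real.sin (θm / 2) / (θm / 2) := by
    rw [hs2]; exact sin_div_anti (by linarith) (by linarith) h2π.le
  have hmul1 : 2 * r * Real.sin (θm / 2) ≤ r * θm * _root_.sinc (θ₁ / 2) := by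
    have := mul_le_mul_of_nonneg_left key1 (le_of_lt (by positivity : (0:ℝ) < r * θm))
    calc 2 * r * Real.sin (θm / 2) = r * θm * (Real.sin (θm / 2) / (θm / 2)) := by
          field_simp
      _ ≤ r * θm * _root_.sinc (θ₁ / 2) := this
  have hmul2 : r * θm * _root_.sinc (θ₂ / 2) ≤ 2 * r * Real.sin (θm / 2) := by
    have := mul_le_mul_of_nonneg_left key2 (le_of_lt (by positivity : (0:ℝ) < r * θm))
    calc r * θm * _root_.sinc (θ₂ / 2) ≤ r * θm * (Real.sin (θm / 2) / (θm / 2)) := this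
      _ = 2 * r * Real.sin (θm / 2) := by field_simp
  constructor
  · rw [hsqrt, div_le_iff₀ hs1pos]; exact hmul1
  · rw [hsqrt, le_div_iff₀ hs2pos]; exact hmul2
end

section
/- Upper bound for fixed-radius turn-to-bearing path length: if a turn-to-bearing path of radius r > 0 exits its turn at angle Θ with 0 ≤ Θ ≤ φ₂ < 2π and then goes straight to (x,y), then its length is at most r·φ₂ + √((x − w_x)² + (y − w_y)²), where w = (r sin φ₂, r(1 − cos φ₂)). -/
open Real

/-- The plane is `ℂ`; this is the point at angle `t` on the turning circle of radius `r`
centred at `(0, r)`, which starts at the origin heading along the positive real axis. -/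
noncomputable def turnPoint (r t : ℝ) : ℂ := ⟨r * sin t, r * (1 - cos t)⟩

lemma turnPoint_eq_circleMap (r t : ℝ) :
    turnPoint r t = circleMap (r * Complex.I) r (t - π / 2) := by
  apply Complex.ext <;>
    simp [turnPoint, circleMap, Complex.exp_re, Complex.exp_im, cos_sub_pi_div_two,
      sin_sub_pi_div_two]
  ring

lemma dist_turnPoint_le (r s t : ℝ) :
    dist (turnPoint r s) (turnPoint r t) ≤ |r| * |s - t| := by
  simpa [turnPoint_eq_circleMap, Real.dist_eq] using
    (lipschitzWith_circleMap (r * Complex.I) r).dist_le_mul (s - π / 2) (t - π / 2)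

lemma dist_turnPoint (x y r t : ℝ) :
    dist (⟨x, y⟩ : ℂ) (turnPoint r t) = √((x - r * sin t) ^ 2 + (y - r * (1 - cos t)) ^ 2) :=
  Complex.dist_eq_re_im _ _

theorem path_length_upper_bound_general (r Θ φ₂ x y : ℝ) (hr : 0 < r)
    (h2 : Θ ≤ φ₂) :
    r * Θ + Real.sqrt ((x - r * Real.sin Θ) ^ 2 +
        (y - r * (1 - Real.cos Θ)) ^ 2) ≤
      r * φ₂ + Real.sqrt ((x - r * Real.sin φ₂) ^ 2 +
        (y - r * (1 - Real.cos φ₂)) ^ 2) := by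
  rw [← dist_turnPoint, ← dist_turnPoint]
  have chord : dist (turnPoint r φ₂) (turnPoint r Θ) ≤ r * (φ₂ - Θ) := by
    simpa [abs_of_pos hr, abs_of_nonneg (sub_nonneg.2 h2)] using dist_turnPoint_le r φ₂ Θ
  linarith [dist_triangle (⟨x, y⟩ : ℂ) (turnPoint r φ₂) (turnPoint r Θ)]

/-- Upper bound for fixed-radius turn-to-bearing path length: if the turn of radius
`r > 0` exits at angle `Θ` with `0 ≤ Θ ≤ φ₂ < 2π`, the path length to `(x,y)` is at
most `r·φ₂ + ‖(x,y) − w‖` where `w = (r sin φ₂, r(1 − cos φ₂))`. -/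
theorem path_length_upper_bound (r Θ φ₂ x y : ℝ) (hr : 0 < r)
    (h1 : 0 ≤ Θ) (h2 : Θ ≤ φ₂) (h3 : φ₂ < 2 * π) :
    r * Θ + Real.sqrt ((x - r * Real.sin Θ) ^ 2 +
        (y - r * (1 - Real.cos Θ)) ^ 2) ≤
      r * φ₂ + Real.sqrt ((x - r * Real.sin φ₂) ^ 2 +
        (y - r * (1 - Real.cos φ₂)) ^ 2) :=
  path_length_upper_bound_general r Θ φ₂ x y hr h2
end

section
/- Quadratic characterization of tangency angles: for a circle of radius r ≠ 0 and target point (x,y), the critical points of the angle function κ(θ) = atan((y − r(1 − cos θ))/(x − r sin θ)) occur exactly where (2r − y)·tan²(θ/2) − 2x·tan(θ/2) + y = 0, for θ ∉ {0, π} with the denominator nonzero. -/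
/-!
Differentiating `arctan (u / v)` gives `(u' v - u v') / (u² + v²)`. In the Weierstrass
substitution `t = tan (θ / 2)` the numerator becomes `r ((2r - y) t² - 2x t + y) / (1 + t²)`
and the factor `2 (1 - cos θ) / sin² θ` becomes `1 + t²` (this needs `t ≠ 0`, i.e. `sin θ ≠ 0`),
so both sides are the same rational function of `t`.
-/

open Real

theorem HasDerivAt.arctan_div {f g : ℝ → ℝ} {f' g' x : ℝ} (hf : HasDerivAt f f' x)
    (hg : HasDerivAt g g' x) (hx : g x ≠ 0) :
    HasDerivAt (fun t => Real.arctan (f t / g t))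
      ((f' * g x - f x * g') / (f x ^ 2 + g x ^ 2)) x := by
  refine (hf.div hg hx).arctan.congr_deriv ?_
  simp only [Pi.div_apply]
  field_simp
  ring

theorem Real.sin_ne_zero_of_pos_of_lt_two_pi {θ : ℝ} (h0 : 0 < θ) (h2π : θ < 2 * π)
    (hπ : θ ≠ π) : sin θ ≠ 0 := by
  rw [← neg_ne_zero, ← sin_sub_pi, ne_eq,
    sin_eq_zero_iff_of_lt_of_lt (by linarith) (by linarith)]
  exact sub_ne_zero.mpr hπ

theorem kappa_hasDerivAt_general (r x y θ : ℝ)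
    (h1 : 0 < θ) (h2 : θ < 2 * π) (hπ : θ ≠ π)
    (hden : x - r * Real.sin θ ≠ 0) :
    HasDerivAt (fun φ => Real.arctan ((y - r * (1 - Real.cos φ)) / (x - r * Real.sin φ)))
      (r * ((2 * r - y) * Real.tan (θ / 2) ^ 2 - 2 * x * Real.tan (θ / 2) + y) /
        (2 * (1 - Real.cos θ) / Real.sin θ ^ 2 *
          ((y - r * (1 - Real.cos θ)) ^ 2 + (x - r * Real.sin θ) ^ 2))) θ := by
  have hsin := sin_ne_zero_of_pos_of_lt_two_pi h1 h2 hπ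
  have hcos : cos θ ≠ -1 := fun h => hsin (by nlinarith [sin_sq_add_cos_sq θ])
  have htan : tan (θ / 2) ≠ 0 := by
    intro h
    apply hsin
    rw [sin_eq_two_mul_tan_half_div_one_add_tan_half_sq, h]
    simp
  have hu : HasDerivAt (fun φ => y - r * (1 - cos φ)) (-(r * sin θ)) θ := by
    simpa using (((hasDerivAt_cos θ).const_sub 1).const_mul r).const_sub y
  have hv : HasDerivAt (fun φ => x - r * sin φ) (-(r * cos θ)) θ :=
    ((hasDerivAt_sin θ).const_mul r).const_sub x
  convert hu.arctan_div hv hden using 1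
  rw [sin_eq_two_mul_tan_half_div_one_add_tan_half_sq] at hden
  rw [sin_eq_two_mul_tan_half_div_one_add_tan_half_sq,
    cos_eq_two_mul_tan_half_div_one_sub_tan_half_sq θ hcos]
  field_simp
  ring

/-- Quadratic characterization of tangency angles: the derivative of the angle
function `κ(θ) = arctan((y − r(1 − cos θ))/(x − r sin θ))` is
`r·((2r − y)tan²(θ/2) − 2x tan(θ/2) + y)/D(θ)` where
`D(θ) = 2(1 − cos θ)/sin²θ · ((y − r(1 − cos θ))² + (x − r sin θ)²)`, so the
critical points occur exactly at the roots of the quadratic in `tan(θ/2)`. -/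
theorem kappa_hasDerivAt (r x y θ : ℝ) (hr : r ≠ 0)
    (h1 : 0 < θ) (h2 : θ < 2 * π) (hπ : θ ≠ π)
    (hden : x - r * Real.sin θ ≠ 0) :
    HasDerivAt (fun φ => Real.arctan ((y - r * (1 - Real.cos φ)) / (x - r * Real.sin φ)))
      (r * ((2 * r - y) * Real.tan (θ / 2) ^ 2 - 2 * x * Real.tan (θ / 2) + y) /
        (2 * (1 - Real.cos θ) / Real.sin θ ^ 2 *
          ((y - r * (1 - Real.cos θ)) ^ 2 + (x - r * Real.sin θ) ^ 2))) θ :=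
  kappa_hasDerivAt_general r x y θ h1 h2 hπ hden
end

section
/- The exit angle Θ = 2·atan((x − √(x² − (2r − y)y))/(2r − y)) (for 2r − y ≠ 0 and discriminant x² − (2r − y)y ≥ 0) satisfies the tangency condition: the point (x,y) minus the tangent point (r sin Θ, r(1 − cos Θ)) is parallel to the heading direction (cos Θ, sin Θ). -/
open Real

/-! With `t = tan (Θ / 2)` the sine and cosine of `Θ` are rational in `t`, and after clearing the
factor `(1 + t²)²` the tangency condition becomes the quadratic `(2r − y)t² − 2xt + y = 0`.
The exit angle is `2 · arctan` of one of its roots, as given by the quadratic formula. -/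

namespace Real

theorem sin_two_mul_arctan (t : ℝ) : sin (2 * arctan t) = 2 * t / (1 + t ^ 2) := by
  rw [sin_two_mul, sin_arctan, cos_arctan]
  field_simp
  rw [sq_sqrt (by positivity)]

theorem cos_two_mul_arctan (t : ℝ) : cos (2 * arctan t) = (1 - t ^ 2) / (1 + t ^ 2) := by
  rw [cos_two_mul, cos_sq_arctan]
  field_simp
  ring

end Real

theorem sub_sqrt_div_isRoot_of_half_discrim_nonneg {a b c : ℝ} (ha : a ≠ 0)
    (hd : 0 ≤ b ^ 2 - a * c) :
    let t := (b - √(b ^ 2 - a * c)) / a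
    a * t ^ 2 - 2 * b * t + c = 0 := by
  intro t
  have hdiscrim : discrim a (-2 * b) c = (2 * √(b ^ 2 - a * c)) * (2 * √(b ^ 2 - a * c)) := by
    rw [discrim]
    linear_combination -4 * sq_sqrt hd
  have hroot := (quadratic_eq_zero_iff ha hdiscrim t).2 <| Or.inr <| by
    simp only [t]
    field_simp
  linear_combination hroot

theorem tangency_of_two_mul_arctan {r x y t : ℝ}
    (ht : (2 * r - y) * t ^ 2 - 2 * x * t + y = 0) :
    let Θ := 2 * arctan t
    (x - r * sin Θ) * sin Θ = (y - r * (1 - cos Θ)) * cos Θ := by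
  intro Θ
  rw [sin_two_mul_arctan, cos_two_mul_arctan]
  field_simp
  linear_combination -(1 + t ^ 2) * ht

/-- The exit angle `Θ = 2·arctan((x − √(x² − (2r − y)y))/(2r − y))` satisfies the
tangency condition: the displacement from the tangent point `(r sin Θ, r(1 − cos Θ))`
to `(x,y)` is parallel to the heading direction `(cos Θ, sin Θ)`. -/
theorem exit_angle_tangency (r x y : ℝ) (h : 2 * r - y ≠ 0)
    (hdisc : 0 ≤ x ^ 2 - (2 * r - y) * y) :
    let Θ := 2 * Real.arctan ((x - Real.sqrt (x ^ 2 - (2 * r - y) * y)) / (2 * r - y))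
    (x - r * Real.sin Θ) * Real.sin Θ = (y - r * (1 - Real.cos Θ)) * Real.cos Θ :=
  tangency_of_two_mul_arctan (sub_sqrt_div_isRoot_of_half_discrim_nonneg h hdisc)
end

section
/- Monotonicity of radius in approach angle: for fixed (x,y) and angles 0 < θ₂ < θ₁ < 2π such that both R(x,y,θ₁) and R(x,y,θ₂) are defined and both correspond to valid tangent approaches with positive straight-segment distance, R(x,y,θ) = (x sin θ − y cos θ)/(1 − cos θ) is strictly increasing; in particular θ₁ > θ₂ > 0 implies R(x,y,θ₁) > R(x,y,θ₂), under the assumption that both angles lie in the feasible range (θ_m/2, θ_m] where θ_m = 2·atan2(y,x) > 0. -/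
open Real Set

/-- Two-argument arctangent: the angle of the point `(x, y)` in the plane. -/
noncomputable def atan2 (y x : ℝ) : ℝ := Complex.arg ⟨x, y⟩

/-- The turn radius `R(x,y,θ) = (x sin θ − y cos θ)/(1 − cos θ)` required to reach
`(x,y)` with final heading `θ`. -/
noncomputable def Rrad (x y θ : ℝ) : ℝ :=
  (x * Real.sin θ - y * Real.cos θ) / (1 - Real.cos θ)

/-!
In terms of `u = cot (θ/2)` the radius is the concave quadratic `x u + (y/2)(1 - u²)`, whose
vertex is at `u = x / y = cot (θ_m/2)`. On the feasible range `θ/2 ∈ (θ_m/4, θ_m/2]` the half angle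
lies in `(0, π)`, where `cot` is decreasing, so `u ≥ x / y`: the quadratic decreases in `u`, hence the
radius increases in `θ`.
-/

theorem Real.strictAntiOn_cot : StrictAntiOn cot (Ioo 0 π) := by
  rintro a ⟨ha0, haπ⟩ b ⟨hb0, hbπ⟩ hab
  have hsa : 0 < sin a := sin_pos_of_pos_of_lt_pi ha0 haπ
  have hsb : 0 < sin b := sin_pos_of_pos_of_lt_pi hb0 hbπ
  have hsba : 0 < sin (b - a) := sin_pos_of_pos_of_lt_pi (by linarith) (by linarith)
  rw [sin_sub] at hsba
  rw [cot_eq_cos_div_sin, cot_eq_cos_div_sin, div_lt_div_iff₀ hsb hsa]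
  linarith

theorem atan2_mem_Ioo {x y : ℝ} (hy : 0 < y) : atan2 y x ∈ Ioo 0 π := by
  refine ⟨lt_of_le_of_ne (Complex.arg_nonneg_iff.2 hy.le) ?_,
    Complex.arg_lt_pi_iff.2 (Or.inr hy.ne')⟩
  exact fun h ↦ hy.ne' (Complex.arg_eq_zero_iff.1 h.symm).2

theorem cot_atan2 {x y : ℝ} (hy : y ≠ 0) : cot (atan2 y x) = x / y := by
  have hz : (⟨x, y⟩ : ℂ) ≠ 0 := fun h ↦ hy (congrArg Complex.im h)
  have hr : ‖(⟨x, y⟩ : ℂ)‖ ≠ 0 := norm_ne_zero_iff.2 hz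
  rw [atan2, cot_eq_cos_div_sin, Complex.cos_arg hz, Complex.sin_arg]
  field_simp

noncomputable def cotRadius (x y u : ℝ) : ℝ := x * u + y / 2 * (1 - u ^ 2)

theorem Rrad_eq_cotRadius (x y θ : ℝ) (hs : sin (θ / 2) ≠ 0) :
    Rrad x y θ = cotRadius x y (cot (θ / 2)) := by
  have hsin : sin θ = 2 * sin (θ / 2) * cos (θ / 2) := by rw [← sin_two_mul]; ring_nf
  have hcos : cos θ = 1 - 2 * sin (θ / 2) ^ 2 := by rw [← cos_two_mul_eq_one_sub]; ring_nf
  rw [Rrad, cotRadius, cot_eq_cos_div_sin, hsin, hcos]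
  field_simp
  linear_combination (2 * sin (θ / 2) ^ 2 * y) * sin_sq_add_cos_sq (θ / 2)

theorem cotRadius_strictAntiOn {x y : ℝ} (hy : 0 < y) :
    StrictAntiOn (cotRadius x y) (Ici (x / y)) := by
  rintro a ha b - hab
  rw [mem_Ici, div_le_iff₀ hy] at ha
  have hdiff : cotRadius x y b - cotRadius x y a = (b - a) * (x - y / 2 * (a + b)) := by
    unfold cotRadius; ring
  nlinarith [mul_pos (sub_pos.2 hab) hy]

theorem radius_monotone_general (x y θ₁ θ₂ : ℝ) (hy : 0 < y)
    (h1 : 2 * atan2 y x / 2 < θ₂) (h2 : θ₂ < θ₁) (h3 : θ₁ ≤ 2 * atan2 y x) :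
    Rrad x y θ₁ > Rrad x y θ₂ := by
  obtain ⟨hφ0, hφπ⟩ := atan2_mem_Ioo (x := x) hy
  have ht₁ : θ₁ / 2 ∈ Ioo 0 π := ⟨by linarith, by linarith⟩
  have ht₂ : θ₂ / 2 ∈ Ioo 0 π := ⟨by linarith, by linarith⟩
  have hcot₁ : x / y ≤ cot (θ₁ / 2) := by
    rw [← cot_atan2 hy.ne']
    exact strictAntiOn_cot.antitoneOn ht₁ ⟨hφ0, hφπ⟩ (by linarith)
  have hcot₁₂ : cot (θ₁ / 2) < cot (θ₂ / 2) := strictAntiOn_cot ht₂ ht₁ (by linarith)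
  rw [Rrad_eq_cotRadius x y θ₁ (sin_pos_of_pos_of_lt_pi ht₁.1 ht₁.2).ne',
    Rrad_eq_cotRadius x y θ₂ (sin_pos_of_pos_of_lt_pi ht₂.1 ht₂.2).ne']
  exact cotRadius_strictAntiOn hy hcot₁ (mem_Ici.2 (hcot₁.trans hcot₁₂.le)) hcot₁₂

/-- Monotonicity of radius in approach angle: for `y > 0` and feasible approach
angles `θ_m/2 < θ₂ < θ₁ ≤ θ_m` (where `θ_m = 2·atan2(y,x) > 0`), the required
radius is strictly increasing: `R(x,y,θ₁) > R(x,y,θ₂)`. -/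
theorem radius_monotone (x y θ₁ θ₂ : ℝ) (hy : 0 < y)
    (hθm : 0 < 2 * atan2 y x)
    (h1 : 2 * atan2 y x / 2 < θ₂) (h2 : θ₂ < θ₁) (h3 : θ₁ ≤ 2 * atan2 y x) :
    Rrad x y θ₁ > Rrad x y θ₂ :=
  radius_monotone_general x y θ₁ θ₂ hy h1 h2 h3
end

section
/- Range of the angle-to-target function: for r > 0 and a point (x,y) outside the turning circle (i.e., x² + y² > 2ry with y such that the configuration is valid), the continuous branch of κ(θ) = angle from (r sin θ, r(1−cos θ)) to (x,y) attains the value θ_m/2 only at θ = 0 or θ = θ_m, where θ_m = 2·atan2(y,x). -/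
open Real

/-!
Writing `z = x + iy`, the hypothesis says that `z` and `z - r (sin θ + i (1 - cos θ))` have the
same argument, so their cross product vanishes: `x (1 - cos θ) = y sin θ`. By the half-angle
formulas this factors as `sin (θ/2) · (x sin (θ/2) - y cos (θ/2)) = 0`. The first factor vanishes
only at `θ = 0`; the second says `sin (θ/2 - arg z) = 0`, and the ranges `θ/2 ∈ [0, π)`,
`arg z ∈ [0, π)` force `θ/2 = arg z`.
-/

namespace Complex

theorem im_mul_re_eq_re_mul_im_of_arg_eq {w z : ℂ} (h : arg w = arg z) :
    w.im * z.re = w.re * z.im := by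
  rw [← norm_mul_sin_arg w, ← norm_mul_cos_arg z, ← norm_mul_cos_arg w, ← norm_mul_sin_arg z, h]
  ring

theorem eq_arg_of_re_mul_sin_eq_im_mul_cos {z : ℂ} {α : ℝ} (hz : z ≠ 0)
    (h : z.re * Real.sin α = z.im * Real.cos α) (hlo : arg z - π < α) (hhi : α < arg z + π) :
    α = arg z := by
  have hsin : Real.sin (α - arg z) = 0 := by
    have hnorm : ‖z‖ * Real.sin (α - arg z) = 0 := by
      rw [Real.sin_sub]
      linear_combination Real.sin α * norm_mul_cos_arg z - Real.cos α * norm_mul_sin_arg z + h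
    exact (mul_eq_zero.mp hnorm).resolve_left (norm_ne_zero_iff.mpr hz)
  linarith [(Real.sin_eq_zero_iff_of_lt_of_lt (by linarith) (by linarith)).mp hsin]

end Complex

theorem mul_one_sub_cos_two_mul_sub_mul_sin_two_mul (x y α : ℝ) :
    x * (1 - cos (2 * α)) - y * sin (2 * α) = 2 * sin α * (x * sin α - y * cos α) := by
  rw [cos_two_mul, sin_two_mul, cos_sq']
  ring

theorem kappa_attains_half_thetam_general (r x y θ : ℝ) (hr : 0 < r) (hy : 0 < y)
    (h1 : 0 ≤ θ) (h2 : θ < 2 * π)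
    (hk : atan2 (y - r * (1 - Real.cos θ)) (x - r * Real.sin θ) = 2 * atan2 y x / 2) :
    θ = 0 ∨ θ = 2 * atan2 y x := by
  set z : ℂ := ⟨x, y⟩
  have harg : Complex.arg ⟨x - r * sin θ, y - r * (1 - cos θ)⟩ = Complex.arg z := by
    rw [← atan2, hk, mul_div_cancel_left₀ _ two_ne_zero, atan2]
  have hcross := Complex.im_mul_re_eq_re_mul_im_of_arg_eq harg
  have hchord : x * (1 - cos θ) - y * sin θ = 0 := by
    refine (mul_eq_zero.mp ?_).resolve_left hr.ne'
    linear_combination -hcross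
  rw [← mul_div_cancel₀ θ two_ne_zero, mul_one_sub_cos_two_mul_sub_mul_sin_two_mul] at hchord
  rcases mul_eq_zero.mp hchord with hsin | hline
  · left
    have := (sin_eq_zero_iff_of_lt_of_lt (by linarith [pi_pos]) (by linarith)).mp
      ((mul_eq_zero.mp hsin).resolve_left two_ne_zero)
    linarith
  · right
    have hz : z ≠ 0 := fun h => hy.ne' (congrArg Complex.im h)
    have hnonneg : 0 ≤ Complex.arg z := Complex.arg_nonneg_iff.mpr hy.le
    have hlt : Complex.arg z < π := Complex.arg_lt_pi_iff.mpr (Or.inr hy.ne')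
    have := Complex.eq_arg_of_re_mul_sin_eq_im_mul_cos hz (sub_eq_zero.mp hline)
      (by linarith) (by linarith)
    unfold atan2
    linarith

/-- Range of the angle-to-target function: for `r > 0` and a point `(x,y)` with
`y > 0` outside the turning circle (`x² + y² > 2ry`), the angle
`κ(θ) = atan2(y − r(1 − cos θ), x − r sin θ)` attains the value `θ_m/2`
(where `θ_m = 2·atan2(y,x)`) only at `θ = 0` or `θ = θ_m`. -/
theorem kappa_attains_half_thetam (r x y θ : ℝ) (hr : 0 < r) (hy : 0 < y)
    (hout : x ^ 2 + y ^ 2 > 2 * r * y) (h1 : 0 ≤ θ) (h2 : θ < 2 * π)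
    (hk : atan2 (y - r * (1 - Real.cos θ)) (x - r * Real.sin θ) = 2 * atan2 y x / 2) :
    θ = 0 ∨ θ = 2 * atan2 y x :=
  kappa_attains_half_thetam_general r x y θ hr hy h1 h2 hk
end

section
/- Turn-to-bearing trajectories are parameterized by arc length: for the piecewise path f(d) defined by f(d) = (r sin(d/r), r(1 − cos(d/r))) for 0 ≤ d ≤ rθ_c and f(d) = (r sin θ_c + (d − rθ_c)cos θ_c, r(1 − cos θ_c) + (d − rθ_c)sin θ_c) for d > rθ_c (with r > 0, 0 < θ_c < 2π), the path is C¹ (continuously differentiable), and ‖f'(d)‖ = 1 for all d > 0, so ∫₀^D ‖f'(α)‖ dα = D. -/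
/-!
While turning, the heading at distance `d` is `d / r`, and a circle of radius `r` traversed
at heading `d / r` has velocity `(cos (d / r), sin (d / r))`. The straight segment continues
with the constant velocity `(cos θ_c, sin θ_c)` reached at the end of the turn, so the two
pieces glue to a differentiable path whose velocity is `(cos h, sin h)` for the continuous
heading `h d = min d (r θ_c) / r`. Hence the speed is `cos² h + sin² h = 1` and the arc
length over `[0, D]` is `D`.
-/

open Real

theorem HasDerivAt.ite_le {F : Type*} [NormedAddCommGroup F] [NormedSpace ℝ F]
    {f g : ℝ → F} {f' : F} {c x : ℝ}
    (hf : x ≤ c → HasDerivAt f f' x) (hg : c ≤ x → HasDerivAt g f' x) (hfg : f c = g c) :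
    HasDerivAt (fun y => if y ≤ c then f y else g y) f' x := by
  rcases lt_trichotomy x c with hxc | rfl | hcx
  · refine (hf hxc.le).congr_of_eventuallyEq ?_
    filter_upwards [Iio_mem_nhds hxc] with y hy
    exact if_pos hy.le
  · have hleft : HasDerivWithinAt (fun y => if y ≤ x then f y else g y) f' (Set.Iic x) x :=
      (hf le_rfl).hasDerivWithinAt.congr (fun y hy => if_pos hy) (if_pos le_rfl)
    have hright : HasDerivWithinAt (fun y => if y ≤ x then f y else g y) f' (Set.Ici x) x := by
      refine (hg le_rfl).hasDerivWithinAt.congr (fun y hy => ?_) (by simp [hfg])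
      rcases (Set.mem_Ici.mp hy).eq_or_lt with rfl | hxy
      · simp [hfg]
      · simp [not_le.mpr hxy]
    have hboth := hleft.union hright
    rw [Set.Iic_union_Ici] at hboth
    exact hboth.hasDerivAt Filter.univ_mem
  · refine (hg hcx.le).congr_of_eventuallyEq ?_
    filter_upwards [Ioi_mem_nhds hcx] with y hy
    exact if_neg (not_le.mpr hy)

theorem hasDerivAt_ite_le_tangent {g g' : ℝ → ℝ} {c : ℝ} (hg : ∀ x, HasDerivAt g (g' x) x)
    (x : ℝ) :
    HasDerivAt (fun y => if y ≤ c then g y else g c + (y - c) * g' c) (g' (min x c)) x := by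
  refine HasDerivAt.ite_le (fun hxc => ?_) (fun hcx => ?_) (by simp)
  · simpa only [min_eq_left hxc] using hg x
  · rw [min_eq_right hcx]
    simpa using (((hasDerivAt_id x).sub_const c).mul_const (g' c)).const_add (g c)

theorem hasDerivAt_mul_sin_div {r : ℝ} (hr : r ≠ 0) (x : ℝ) :
    HasDerivAt (fun y => r * sin (y / r)) (cos (x / r)) x :=
  (((hasDerivAt_id' x).div_const r).sin.const_mul r).congr_deriv (by field_simp)

theorem hasDerivAt_mul_one_sub_cos_div {r : ℝ} (hr : r ≠ 0) (x : ℝ) :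
    HasDerivAt (fun y => r * (1 - cos (y / r))) (sin (x / r)) x :=
  ((((hasDerivAt_id' x).div_const r).cos.const_sub 1).const_mul r).congr_deriv (by field_simp)

theorem ttb_arclength_parameterization_general (r θc : ℝ) (hr : 0 < r) :
    ∃ fx' fy' : ℝ → ℝ,
      (∀ d : ℝ, HasDerivAt
        (fun d => if d ≤ r * θc then r * Real.sin (d / r)
          else r * Real.sin θc + (d - r * θc) * Real.cos θc) (fx' d) d) ∧
      (∀ d : ℝ, HasDerivAt
        (fun d => if d ≤ r * θc then r * (1 - Real.cos (d / r))
          else r * (1 - Real.cos θc) + (d - r * θc) * Real.sin θc) (fy' d) d) ∧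
      Continuous fx' ∧ Continuous fy' ∧
      (∀ d : ℝ, 0 < d → Real.sqrt (fx' d ^ 2 + fy' d ^ 2) = 1) ∧
      (∀ D : ℝ, 0 ≤ D → ∫ α in (0:ℝ)..D, Real.sqrt (fx' α ^ 2 + fy' α ^ 2) = D) := by
  have hturn : r * θc / r = θc := by field_simp
  have hheading : Continuous fun d => min d (r * θc) / r := by fun_prop
  have hspeed (d : ℝ) : √(cos (min d (r * θc) / r) ^ 2 + sin (min d (r * θc) / r) ^ 2) = 1 := by
    rw [cos_sq_add_sin_sq, sqrt_one]
  refine ⟨fun d => cos (min d (r * θc) / r), fun d => sin (min d (r * θc) / r),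
    fun d => ?_, fun d => ?_, continuous_cos.comp hheading, continuous_sin.comp hheading,
    fun d _ => hspeed d, fun D _ => by simp_rw [hspeed]; simp⟩
  · simpa only [hturn] using
      hasDerivAt_ite_le_tangent (c := r * θc) (hasDerivAt_mul_sin_div hr.ne') d
  · simpa only [hturn] using
      hasDerivAt_ite_le_tangent (c := r * θc) (hasDerivAt_mul_one_sub_cos_div hr.ne') d

/-- Turn-to-bearing trajectories are parameterized by arc length: the piecewise path
(circular arc of radius `r > 0` through angle `θ_c ∈ (0, 2π)` followed by a straight
line in direction `θ_c`) is C¹, its derivative has unit norm for all `d > 0`, and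
hence its arc length from `0` to `D` equals `D`. -/
theorem ttb_arclength_parameterization (r θc : ℝ) (hr : 0 < r)
    (h1 : 0 < θc) (h2 : θc < 2 * π) :
    ∃ fx' fy' : ℝ → ℝ,
      (∀ d : ℝ, HasDerivAt
        (fun d => if d ≤ r * θc then r * Real.sin (d / r)
          else r * Real.sin θc + (d - r * θc) * Real.cos θc) (fx' d) d) ∧
      (∀ d : ℝ, HasDerivAt
        (fun d => if d ≤ r * θc then r * (1 - Real.cos (d / r))
          else r * (1 - Real.cos θc) + (d - r * θc) * Real.sin θc) (fy' d) d) ∧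
      Continuous fx' ∧ Continuous fy' ∧
      (∀ d : ℝ, 0 < d → Real.sqrt (fx' d ^ 2 + fy' d ^ 2) = 1) ∧
      (∀ D : ℝ, 0 ≤ D → ∫ α in (0:ℝ)..D, Real.sqrt (fx' α ^ 2 + fy' α ^ 2) = D) :=
  ttb_arclength_parameterization_general r θc hr
end
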